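/- Suppose there is an α-approximation algorithm producing an m-fold dominating set D of a graph G, and a γ-approximation algorithm for the minimum node-weighted k-connected Steiner network problem with terminal set D (where vertices of D are reweighted to zero). If m ≥ k, then outputting the vertex set of the resulting k-connected subgraph yields a (k,m)-CDS of G of weight at most (α + γ) times the minimum weight of a (k,m)-CDS: formally, if c(D) ≤ α·c(OPT) and c(V(F) \ D) ≤ γ·c(F_min \ D) where F_min is a minimum-weight set with G[F_min ∪ D] k-connected, then c(V(F)) ≤ (α+γ)·c(OPT). -/

import Mathlib

open scoped Classical

noncomputable section

/-- A graph is `k`-connected if it has more than `k` vertices and remains connected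
after deleting any fewer than `k` vertices. -/
def KConnected {V : Type*} [Fintype V] (k : ℕ) (G : SimpleGraph V) : Prop :=
  k < Fintype.card V ∧ ∀ S : Finset V, S.card < k → (G.induce {v : V | v ∉ S}).Connected

/-! Deleting fewer than `k` vertices from `G[OPT ∪ D]` leaves the rest of `OPT` connected,
and every surviving vertex outside `OPT` keeps one of its `m ≥ k` neighbours in `OPT`; so
`G[OPT ∪ D]` is `k`-connected. Thus `OPT` is a feasible Steiner augmentation of `D`, giving
`c(Fmin \ D) ≤ c(OPT)`, and `c(VF) = c(D) + c(VF \ D) ≤ α c(OPT) + γ c(OPT)`. -/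

open Finset

namespace SimpleGraph

variable {V : Type*} {G : SimpleGraph V}

def induceInduceIso {s : Set V} {t : Set s} {u : Set V} (h : Subtype.val '' t = u) :
    (G.induce s).induce t ≃g G.induce u where
  toEquiv := (Equiv.Set.image _ t Subtype.val_injective).trans (Equiv.setCongr h)
  map_rel_iff' := Iff.rfl

lemma induce_connected_of_forall_adj {A B : Set V} (hA : (G.induce A).Connected) (hAB : A ⊆ B)
    (hadj : ∀ v ∈ B, v ∉ A → ∃ u ∈ A, G.Adj v u) : (G.induce B).Connected := by
  obtain ⟨⟨a, ha⟩⟩ := hA.nonempty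
  refine G.induce_connected_of_patches a (hAB ha) fun {v} hv => ?_
  by_cases hvA : v ∈ A
  · exact ⟨A, hAB, ha, hvA, hA.preconnected _ _⟩
  obtain ⟨u, huA, hvu⟩ := hadj v hv hvA
  have hconn : (G.induce (A ∪ {v})).Connected :=
    G.connected_induce_union hA.preconnected Preconnected.of_subsingleton huA rfl hvu.symm
  exact ⟨A ∪ {v}, Set.union_subset hAB (Set.singleton_subset_iff.2 hv), Or.inl ha, Or.inr rfl,
    hconn.preconnected _ _⟩

end SimpleGraph

open SimpleGraph

section

variable {V : Type*} {k : ℕ} {G : SimpleGraph V}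

theorem kConnected_induce_iff {B : Finset V} :
    KConnected k (G.induce ↑B) ↔
      k < #B ∧ ∀ S : Finset V, #S < k → (G.induce (↑B \ ↑S : Set V)).Connected := by
  unfold KConnected
  simp only [Finset.coe_sort_coe, Fintype.card_coe]
  refine and_congr_right fun _ => ⟨fun h S hS => ?_, fun h S hS => ?_⟩
  · have hS' : #(S.subtype (· ∈ B)) < k :=
      (card_subtype _ _).trans_le (card_filter_le _ _) |>.trans_lt hS
    exact (induceInduceIso (by ext; simp [and_comm])).connected_iff.1 (h _ hS')
  · refine (induceInduceIso ?_).connected_iff.2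
      (h (S.map (Function.Embedding.subtype _)) (by simpa using hS))
    ext x
    simpa using ⟨fun ⟨hx, hxS⟩ => ⟨hx, fun _ => hxS⟩, fun ⟨hx, hxS⟩ => ⟨hx, hxS hx⟩⟩

theorem KConnected.induce_of_subset {A B : Finset V} (hA : KConnected k (G.induce ↑A))
    (hAB : A ⊆ B) (hdom : ∀ v ∈ B, v ∉ A → k ≤ #(A.filter (G.Adj v))) :
    KConnected k (G.induce ↑B) := by
  obtain ⟨hkA, hA⟩ := kConnected_induce_iff.1 hA
  refine kConnected_induce_iff.2 ⟨hkA.trans_le (card_le_card hAB), fun S hS => ?_⟩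
  refine induce_connected_of_forall_adj (hA S hS) (Set.sdiff_subset_sdiff_left (coe_subset.2 hAB))
    fun v ⟨hvB, hvS⟩ hvAS => ?_
  have hvA : v ∉ A := fun hvA => hvAS ⟨hvA, hvS⟩
  obtain ⟨u, hu, huS⟩ : ∃ u ∈ A.filter (G.Adj v), u ∉ S :=
    not_subset.1 fun hsub => (card_le_card hsub).not_gt (hS.trans_le (hdom v hvB hvA))
  exact ⟨u, ⟨(mem_filter.1 hu).1, huS⟩, (mem_filter.1 hu).2⟩

end

theorem kmcds_two_phase_ratio_general {V : Type*} (k m : ℕ)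
    (hkm : k ≤ m) (G : SimpleGraph V)
    (c : V → ℝ) (hc : ∀ v, 0 ≤ c v) (α γ : ℝ) (hγ : 0 ≤ γ)
    (D VF OPT Fmin : Finset V) (hDVF : D ⊆ VF)
    -- `OPT` is a `(k,m)`-CDS:
    (hOPTconn : KConnected k (G.induce ↑OPT))
    (hOPTdom : ∀ v ∉ OPT, m ≤ (OPT.filter (fun u => G.Adj v u)).card)
    -- `Fmin` is a minimum-weight set whose union with `D` induces a
    -- `k`-connected subgraph:
    (hFminOpt : ∀ C : Finset V, KConnected k (G.induce ↑(C ∪ D)) →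
      ∑ v ∈ Fmin \ D, c v ≤ ∑ v ∈ C \ D, c v)
    -- the two approximation guarantees:
    (hα : ∑ v ∈ D, c v ≤ α * ∑ v ∈ OPT, c v)
    (hγ' : ∑ v ∈ VF \ D, c v ≤ γ * ∑ v ∈ Fmin \ D, c v) :
    ∑ v ∈ VF, c v ≤ (α + γ) * ∑ v ∈ OPT, c v := by
  have hOPT_steiner : KConnected k (G.induce ↑(OPT ∪ D)) :=
    hOPTconn.induce_of_subset subset_union_left fun v _ hv => hkm.trans (hOPTdom v hv)
  have hFmin_le : ∑ v ∈ Fmin \ D, c v ≤ ∑ v ∈ OPT, c v :=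
    (hFminOpt OPT hOPT_steiner).trans
      (sum_le_sum_of_subset_of_nonneg sdiff_subset fun v _ _ => hc v)
  calc ∑ v ∈ VF, c v = ∑ v ∈ D, c v + ∑ v ∈ VF \ D, c v := by rw [← sum_sdiff hDVF, add_comm]
    _ ≤ α * ∑ v ∈ OPT, c v + γ * ∑ v ∈ OPT, c v :=
      add_le_add hα (hγ'.trans (mul_le_mul_of_nonneg_left hFmin_le hγ))
    _ = (α + γ) * ∑ v ∈ OPT, c v := (add_mul _ _ _).symm

/-- Combining an `α`-approximate `m`-fold dominating set `D` with a `γ`-approximate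
node-weighted `k`-connected Steiner augmentation on terminal set `D` gives a
`(k,m)`-CDS of weight at most `(α + γ)` times the optimum, when `m ≥ k`. -/
theorem kmcds_two_phase_ratio {V : Type*} [Fintype V] (k m : ℕ) (hk : 0 < k)
    (hkm : k ≤ m) (G : SimpleGraph V) (hG : KConnected k G)
    (c : V → ℝ) (hc : ∀ v, 0 ≤ c v) (α γ : ℝ) (hγ : 0 ≤ γ)
    (D VF OPT Fmin : Finset V) (hDVF : D ⊆ VF)
    -- `D` is an `m`-fold dominating set:
    (hD : ∀ v ∉ D, m ≤ (D.filter (fun u => G.Adj v u)).card)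
    -- `OPT` is a `(k,m)`-CDS:
    (hOPTconn : KConnected k (G.induce ↑OPT))
    (hOPTdom : ∀ v ∉ OPT, m ≤ (OPT.filter (fun u => G.Adj v u)).card)
    -- `Fmin` is a minimum-weight set whose union with `D` induces a
    -- `k`-connected subgraph:
    (hFminConn : KConnected k (G.induce ↑(Fmin ∪ D)))
    (hFminOpt : ∀ C : Finset V, KConnected k (G.induce ↑(C ∪ D)) →
      ∑ v ∈ Fmin \ D, c v ≤ ∑ v ∈ C \ D, c v)
    -- the two approximation guarantees:
    (hα : ∑ v ∈ D, c v ≤ α * ∑ v ∈ OPT, c v)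
    (hγ' : ∑ v ∈ VF \ D, c v ≤ γ * ∑ v ∈ Fmin \ D, c v) :
    ∑ v ∈ VF, c v ≤ (α + γ) * ∑ v ∈ OPT, c v :=
  kmcds_two_phase_ratio_general k m hkm G c hc α γ hγ D VF OPT Fmin hDVF hOPTconn hOPTdom hFminOpt
    hα hγ'
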